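/- Let γ : [a,b] → ℝ² be a regular curve of length ℓ from p = (0,0) to q = (d,0) with e_γ(a) = e_γ(b) = (1,0), parametrized by arc length. For 0 < t ≤ 1 define τ_t to be the concatenation of the scaled curve t·γ (from 0 to t(d,0)) with the horizontal segment from t(d,0) to (d,0). Then each τ_t (after constant-speed reparametrization) is a regular curve with the same endpoints and end directions as γ, the family {τ_t}, t ∈ [ε, 1], is a regular homotopy from τ_ε to γ = τ_1, and i_{τ_t} = i_γ for all t. -/

import Mathlib

/-! Write `τ_t s = t • γ̂ (c s / t)`, where `γ̂` continues `γ` beyond `ℓ` along the horizontal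
ray and `c = (tℓ + (1 - t)d)/ℓ` is the constant speed. Since `γ` leaves in direction `(1,0)`,
`γ̂` is `C¹` and the chain rule gives the velocity `c • v (min (c s / t) ℓ)`: a positive
multiple of a unit tangent of `γ`, jointly continuous in `(t, s)` for `t > 0`, and horizontal
at both ends. So `θ_γ ∘ min (c · / t) ℓ` is an angle function of `τ_t` with the same endpoint
values as `θ_γ`, and two angle functions of one direction field differ by a constant. -/

open Real Set

noncomputable section

abbrev E2 : Type := EuclideanSpace ℝ (Fin 2)

def vec2 (x y : ℝ) : E2 := WithLp.toLp 2 ![x, y]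

def IsAngleFunction (a b : ℝ) (v : ℝ → E2) (θ : ℝ → ℝ) : Prop :=
  ContinuousOn θ (Icc a b) ∧
    ∀ u ∈ Icc a b, ‖v u‖⁻¹ • v u = vec2 (Real.cos (θ u)) (Real.sin (θ u))

/-- The squeezed curve `τ_t`, parametrized with constant speed
`c = (tℓ + (1−t)d)/ℓ` on `[0, ℓ]`: first the scaled curve `t·γ` (of length `tℓ`),
then the horizontal segment from `t(d,0)` to `(d,0)`. -/
def squeeze (γ : ℝ → E2) (ℓ d t s : ℝ) : E2 :=
  if (t * ℓ + (1 - t) * d) / ℓ * s ≤ t * ℓ then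
    t • γ ((t * ℓ + (1 - t) * d) / ℓ * s / t)
  else
    t • γ ℓ + ((t * ℓ + (1 - t) * d) / ℓ * s - t * ℓ) • vec2 1 0

theorem vec2_inj {x y x' y' : ℝ} : vec2 x y = vec2 x' y' ↔ x = x' ∧ y = y' := by
  refine ⟨fun h => ⟨?_, ?_⟩, fun ⟨hx, hy⟩ => hx ▸ hy ▸ rfl⟩
  · simpa [vec2] using congrArg (· 0) h
  · simpa [vec2] using congrArg (· 1) h

namespace IsAngleFunction

variable {a b : ℝ} {w : ℝ → E2} {θ : ℝ → ℝ}

theorem comp {a' b' : ℝ} {g : ℝ → ℝ} (h : IsAngleFunction a' b' w θ)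
    (hg : ContinuousOn g (Icc a b)) (hgmaps : MapsTo g (Icc a b) (Icc a' b')) :
    IsAngleFunction a b (w ∘ g) (θ ∘ g) :=
  ⟨h.1.comp hg hgmaps, fun u hu => h.2 (g u) (hgmaps hu)⟩

theorem smul_of_pos {c : ℝ → ℝ} (h : IsAngleFunction a b w θ) (hc : ∀ u ∈ Icc a b, 0 < c u) :
    IsAngleFunction a b (fun u => c u • w u) θ :=
  ⟨h.1, fun u hu => (NormedSpace.normalize_smul_of_pos (hc u hu) (w u)).trans (h.2 u hu)⟩

/-- Two angle functions of the same direction field differ by a continuous function with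
values in `2πℤ`, hence by a constant. -/
theorem sub_eq_sub (hab : a ≤ b) {θ' : ℝ → ℝ} (h : IsAngleFunction a b w θ)
    (h' : IsAngleFunction a b w θ') : θ b - θ a = θ' b - θ' a := by
  have hmaps : MapsTo (fun u => θ u - θ' u) (Icc a b) (AddSubgroup.zmultiples (2 * π)) := by
    intro u hu
    obtain ⟨hcos, hsin⟩ := vec2_inj.1 ((h.2 u hu).symm.trans (h'.2 u hu))
    obtain ⟨k, hk⟩ := Real.Angle.angle_eq_iff_two_pi_dvd_sub.1 (Real.Angle.cos_sin_inj hcos hsin)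
    exact ⟨k, by simp only [hk, zsmul_eq_mul, mul_comm]⟩
  have hdiscrete : IsDiscrete (AddSubgroup.zmultiples (2 * π) : Set ℝ) :=
    isDiscrete_iff_discreteTopology.2 (inferInstanceAs (DiscreteTopology (AddSubgroup.zmultiples _)))
  have := isPreconnected_Icc.constant_of_mapsTo hdiscrete (h.1.sub h'.1) hmaps
    (left_mem_Icc.2 hab) (right_mem_Icc.2 hab)
  simp only [Pi.sub_apply] at this
  linarith

end IsAngleFunction

section RayExtend

variable {E : Type*} [NormedAddCommGroup E] [NormedSpace ℝ E]

def rayExtend (γ : ℝ → E) (ℓ : ℝ) (w : E) (u : ℝ) : E :=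
  if u ≤ ℓ then γ u else γ ℓ + (u - ℓ) • w

variable {γ : ℝ → E} {ℓ u : ℝ} {w : E}

theorem rayExtend_of_le (h : u ≤ ℓ) : rayExtend γ ℓ w u = γ u := if_pos h

theorem rayExtend_of_ge (h : ℓ ≤ u) : rayExtend γ ℓ w u = γ ℓ + (u - ℓ) • w := by
  rcases h.eq_or_lt with rfl | hlt
  · simp [rayExtend]
  · exact if_neg hlt.not_ge

theorem hasDerivWithinAt_rayExtend {a : ℝ} {v : ℝ → E} (haℓ : a ≤ ℓ)
    (hγ : ∀ u ∈ Icc a ℓ, HasDerivWithinAt γ (v u) (Icc a ℓ) u) (hw : v ℓ = w) (hu : a ≤ u) :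
    HasDerivWithinAt (rayExtend γ ℓ w) (v (min u ℓ)) (Ici a) u := by
  have hcurve : HasDerivWithinAt (rayExtend γ ℓ w) (v (min u ℓ)) (Icc a ℓ) u := by
    by_cases huℓ : u ≤ ℓ
    · rw [min_eq_left huℓ]
      exact (hγ u ⟨hu, huℓ⟩).congr (fun x hx => rayExtend_of_le hx.2) (rayExtend_of_le huℓ)
    · exact HasFDerivWithinAt.of_notMem_closure (by rw [closure_Icc]; exact fun h => huℓ h.2)
  have hray : HasDerivWithinAt (rayExtend γ ℓ w) (v (min u ℓ)) (Ici ℓ) u := by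
    by_cases hℓu : ℓ ≤ u
    · rw [min_eq_right hℓu, hw]
      have hline : HasDerivAt (fun x : ℝ => γ ℓ + (x - ℓ) • w) w u := by
        simpa using (((hasDerivAt_id u).sub_const ℓ).smul_const w).const_add (γ ℓ)
      exact hline.hasDerivWithinAt.congr (fun x hx => rayExtend_of_ge hx) (rayExtend_of_ge hℓu)
    · exact HasFDerivWithinAt.of_notMem_closure (by rw [closure_Ici]; exact hℓu)
  simpa [Icc_union_Ici_eq_Ici haℓ] using hcurve.union hray

end RayExtend

section Squeeze

def squeezeSpeed (ℓ d t : ℝ) : ℝ := (t * ℓ + (1 - t) * d) / ℓ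

def squeezeParam (ℓ d t s : ℝ) : ℝ := min (squeezeSpeed ℓ d t * s / t) ℓ

def squeezeVelocity {E : Type*} [SMul ℝ E] (v : ℝ → E) (ℓ d t s : ℝ) : E :=
  squeezeSpeed ℓ d t • v (squeezeParam ℓ d t s)

variable {ℓ d t : ℝ}

theorem squeezeSpeed_mul_self (hℓ : ℓ ≠ 0) : squeezeSpeed ℓ d t * ℓ = t * ℓ + (1 - t) * d :=
  div_mul_cancel₀ _ hℓ

theorem squeezeSpeed_pos (hℓ : 0 < ℓ) (hd : 0 ≤ d) (ht0 : 0 < t) (ht1 : t ≤ 1) :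
    0 < squeezeSpeed ℓ d t :=
  div_pos (add_pos_of_pos_of_nonneg (mul_pos ht0 hℓ) (mul_nonneg (sub_nonneg.2 ht1) hd)) hℓ

theorem le_squeezeSpeed_mul_self_div (hℓ : 0 < ℓ) (hd : 0 ≤ d) (ht0 : 0 < t) (ht1 : t ≤ 1) :
    ℓ ≤ squeezeSpeed ℓ d t * ℓ / t := by
  rw [le_div_iff₀ ht0, squeezeSpeed_mul_self hℓ.ne']
  nlinarith

theorem squeezeParam_zero (hℓ : 0 ≤ ℓ) : squeezeParam ℓ d t 0 = 0 := by
  simp [squeezeParam, hℓ]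

theorem squeezeParam_self (hℓ : 0 < ℓ) (hd : 0 ≤ d) (ht0 : 0 < t) (ht1 : t ≤ 1) :
    squeezeParam ℓ d t ℓ = ℓ :=
  min_eq_right (le_squeezeSpeed_mul_self_div hℓ hd ht0 ht1)

theorem squeezeParam_mem_Icc (hℓ : 0 < ℓ) (hd : 0 ≤ d) (ht0 : 0 < t) (ht1 : t ≤ 1) {s : ℝ}
    (hs : 0 ≤ s) : squeezeParam ℓ d t s ∈ Icc 0 ℓ :=
  ⟨le_min (by have := squeezeSpeed_pos hℓ hd ht0 ht1; positivity) hℓ.le, min_le_right _ _⟩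

theorem continuous_squeezeSpeed : Continuous (squeezeSpeed ℓ d) := by
  unfold squeezeSpeed
  fun_prop

theorem continuous_squeezeParam : Continuous (squeezeParam ℓ d t) := by
  unfold squeezeParam
  fun_prop

theorem continuousOn_squeezeParam_uncurry :
    ContinuousOn (fun p : ℝ × ℝ => squeezeParam ℓ d p.1 p.2) {p | p.1 ≠ 0} :=
  continuous_min.comp_continuousOn ((((continuous_squeezeSpeed.comp continuous_fst).mul
    continuous_snd).continuousOn.div continuous_fst.continuousOn fun _ hp => hp).prodMk
      continuousOn_const)

theorem squeeze_eq_smul_rayExtend (γ : ℝ → E2) (ht : 0 < t) (s : ℝ) :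
    squeeze γ ℓ d t s = t • rayExtend γ ℓ (vec2 1 0) (squeezeSpeed ℓ d t * s / t) := by
  unfold squeeze rayExtend squeezeSpeed
  simp only [div_le_iff₀ ht, mul_comm ℓ t]
  split_ifs
  · rfl
  · rw [smul_add, smul_smul, mul_sub, mul_div_cancel₀ _ ht.ne']

theorem squeezeSpeed_one (hℓ : ℓ ≠ 0) : squeezeSpeed ℓ d 1 = 1 := by
  simp [squeezeSpeed, hℓ]

theorem squeeze_one (γ : ℝ → E2) (hℓ : ℓ ≠ 0) {s : ℝ} (hs : s ≤ ℓ) : squeeze γ ℓ d 1 s = γ s := by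
  rw [squeeze_eq_smul_rayExtend γ one_pos, squeezeSpeed_one hℓ, one_mul, div_one, one_smul,
    rayExtend_of_le hs]

theorem squeeze_apply_zero (γ : ℝ → E2) (hℓ : 0 ≤ ℓ) (ht : 0 < t) :
    squeeze γ ℓ d t 0 = t • γ 0 := by
  rw [squeeze_eq_smul_rayExtend γ ht, mul_zero, zero_div, rayExtend_of_le hℓ]

theorem squeeze_apply_self {γ : ℝ → E2} (hℓ : 0 < ℓ) (hd : 0 ≤ d) (ht0 : 0 < t) (ht1 : t ≤ 1)
    (hγℓ : γ ℓ = d • vec2 1 0) : squeeze γ ℓ d t ℓ = γ ℓ := by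
  rw [squeeze_eq_smul_rayExtend γ ht0, rayExtend_of_ge (le_squeezeSpeed_mul_self_div hℓ hd ht0 ht1),
    hγℓ, ← add_smul, smul_smul]
  congr 1
  rw [mul_add, mul_sub, mul_div_cancel₀ _ ht0.ne', squeezeSpeed_mul_self hℓ.ne']
  ring

theorem hasDerivWithinAt_squeeze {γ v : ℝ → E2} (hℓ : 0 < ℓ) (hd : 0 ≤ d) (ht0 : 0 < t)
    (ht1 : t ≤ 1) (hγ : ∀ u ∈ Icc 0 ℓ, HasDerivWithinAt γ (v u) (Icc 0 ℓ) u)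
    (hvℓ : v ℓ = vec2 1 0) {s : ℝ} (hs : 0 ≤ s) :
    HasDerivWithinAt (squeeze γ ℓ d t) (squeezeVelocity v ℓ d t s) (Ici 0) s := by
  have hc := squeezeSpeed_pos hℓ hd ht0 ht1
  have hlin : HasDerivWithinAt (fun s => squeezeSpeed ℓ d t * s / t)
      (squeezeSpeed ℓ d t * 1 / t) (Ici 0) s :=
    (((hasDerivAt_id s).const_mul _).div_const t).hasDerivWithinAt
  have hmaps : MapsTo (fun s => squeezeSpeed ℓ d t * s / t) (Ici 0) (Ici 0) :=
    fun _ hx => div_nonneg (mul_nonneg hc.le hx) ht0.le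
  have hext := hasDerivWithinAt_rayExtend hℓ.le hγ hvℓ (hmaps hs)
  have h := (hext.scomp s hlin hmaps).const_smul t
  rw [smul_smul, mul_one, mul_div_cancel₀ _ ht0.ne'] at h
  exact h.congr (fun x _ => squeeze_eq_smul_rayExtend γ ht0 x) (squeeze_eq_smul_rayExtend γ ht0 s)

section Velocity

variable {E : Type*} [NormedAddCommGroup E] [NormedSpace ℝ E] {v : ℝ → E}

theorem squeezeVelocity_ne_zero (hℓ : 0 < ℓ) (hd : 0 ≤ d) (ht0 : 0 < t) (ht1 : t ≤ 1)
    (hv : ∀ u ∈ Icc 0 ℓ, v u ≠ 0) {s : ℝ} (hs : 0 ≤ s) : squeezeVelocity v ℓ d t s ≠ 0 :=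
  smul_ne_zero (squeezeSpeed_pos hℓ hd ht0 ht1).ne' (hv _ (squeezeParam_mem_Icc hℓ hd ht0 ht1 hs))

theorem inv_norm_smul_squeezeVelocity (hℓ : 0 < ℓ) (hd : 0 ≤ d) (ht0 : 0 < t) (ht1 : t ≤ 1)
    (hunit : ∀ u ∈ Icc 0 ℓ, ‖v u‖ = 1) {s : ℝ} (hs : 0 ≤ s) :
    ‖squeezeVelocity v ℓ d t s‖⁻¹ • squeezeVelocity v ℓ d t s = v (squeezeParam ℓ d t s) :=
  (NormedSpace.normalize_smul_of_pos (squeezeSpeed_pos hℓ hd ht0 ht1) _).trans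
    (NormedSpace.normalize_eq_self_of_norm_eq_one
      (hunit _ (squeezeParam_mem_Icc hℓ hd ht0 ht1 hs)))

theorem continuousOn_squeezeVelocity_uncurry (hv : ContinuousOn v (Icc 0 ℓ)) (hℓ : 0 < ℓ)
    (hd : 0 ≤ d) {ε : ℝ} (hε : 0 < ε) :
    ContinuousOn (fun p : ℝ × ℝ => squeezeVelocity v ℓ d p.1 p.2) (Icc ε 1 ×ˢ Icc 0 ℓ) :=
  (continuous_squeezeSpeed.comp continuous_fst).continuousOn.smul <|
    hv.comp (continuousOn_squeezeParam_uncurry.mono fun _ hp => (hε.trans_le hp.1.1).ne')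
      fun _ hp => squeezeParam_mem_Icc hℓ hd (hε.trans_le hp.1.1) hp.1.2 hp.2.1

end Velocity

theorem IsAngleFunction.squeezeVelocity {v : ℝ → E2} {θ : ℝ → ℝ} (hθ : IsAngleFunction 0 ℓ v θ)
    (hℓ : 0 < ℓ) (hd : 0 ≤ d) (ht0 : 0 < t) (ht1 : t ≤ 1) :
    IsAngleFunction 0 ℓ (squeezeVelocity v ℓ d t) (θ ∘ squeezeParam ℓ d t) :=
  (hθ.comp continuous_squeezeParam.continuousOn fun _ hs =>
    squeezeParam_mem_Icc hℓ hd ht0 ht1 hs.1).smul_of_pos fun _ _ => squeezeSpeed_pos hℓ hd ht0 ht1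

end Squeeze

theorem squeeze_regular_homotopy_general (ℓ d ε : ℝ)
    (hd : 0 < d) (hdl : d ≤ ℓ) (hε : 0 < ε)
    (γ v : ℝ → E2)
    (hderiv : ∀ u ∈ Icc (0:ℝ) ℓ, HasDerivWithinAt γ (v u) (Icc (0:ℝ) ℓ) u)
    (hcont : ContinuousOn v (Icc (0:ℝ) ℓ))
    (hunit : ∀ u ∈ Icc (0:ℝ) ℓ, ‖v u‖ = 1)
    (h0 : γ 0 = 0) (hl : γ ℓ = d • vec2 1 0)
    (hv0 : v 0 = vec2 1 0) (hvl : v ℓ = vec2 1 0) :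
    ∃ V : ℝ → ℝ → E2,
      (∀ s ∈ Icc (0:ℝ) ℓ, squeeze γ ℓ d 1 s = γ s) ∧
      (∀ t ∈ Icc ε 1, squeeze γ ℓ d t 0 = γ 0 ∧ squeeze γ ℓ d t ℓ = γ ℓ) ∧
      (∀ t ∈ Icc ε 1, ∀ s ∈ Icc (0:ℝ) ℓ,
        HasDerivWithinAt (squeeze γ ℓ d t) (V t s) (Icc (0:ℝ) ℓ) s ∧ V t s ≠ 0) ∧
      ContinuousOn (fun p : ℝ × ℝ => V p.1 p.2) (Icc ε 1 ×ˢ Icc (0:ℝ) ℓ) ∧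
      (∀ t ∈ Icc ε 1,
        ‖V t 0‖⁻¹ • V t 0 = vec2 1 0 ∧ ‖V t ℓ‖⁻¹ • V t ℓ = vec2 1 0) ∧
      (∀ t ∈ Icc ε 1, ∀ θt θγ : ℝ → ℝ,
        IsAngleFunction 0 ℓ (V t) θt → IsAngleFunction 0 ℓ v θγ →
          (θt ℓ - θt 0) / (2 * π) = (θγ ℓ - θγ 0) / (2 * π)) := by
  have hℓ : 0 < ℓ := hd.trans_le hdl
  have hv : ∀ u ∈ Icc 0 ℓ, v u ≠ 0 := fun u hu => norm_ne_zero_iff.1 (by simp [hunit u hu])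
  refine ⟨squeezeVelocity v ℓ d, fun s hs => squeeze_one γ hℓ.ne' hs.2, fun t ht => ?_,
    fun t ht s hs => ?_, continuousOn_squeezeVelocity_uncurry hcont hℓ hd.le hε,
    fun t ht => ?_, fun t ht θt θγ hθt hθγ => ?_⟩ <;>
  obtain ⟨ht0, ht1⟩ : 0 < t ∧ t ≤ 1 := ⟨hε.trans_le ht.1, ht.2⟩
  · rw [squeeze_apply_zero γ hℓ.le ht0, h0, smul_zero]
    exact ⟨rfl, squeeze_apply_self hℓ hd.le ht0 ht1 hl⟩
  · exact ⟨(hasDerivWithinAt_squeeze hℓ hd.le ht0 ht1 hderiv hvl hs.1).mono Icc_subset_Ici_self,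
      squeezeVelocity_ne_zero hℓ hd.le ht0 ht1 hv hs.1⟩
  · rw [inv_norm_smul_squeezeVelocity hℓ hd.le ht0 ht1 hunit le_rfl,
      inv_norm_smul_squeezeVelocity hℓ hd.le ht0 ht1 hunit hℓ.le, squeezeParam_zero hℓ.le,
      squeezeParam_self hℓ hd.le ht0 ht1]
    exact ⟨hv0, hvl⟩
  · rw [hθt.sub_eq_sub hℓ.le (hθγ.squeezeVelocity hℓ hd.le ht0 ht1), Function.comp_apply,
      Function.comp_apply, squeezeParam_zero hℓ.le, squeezeParam_self hℓ hd.le ht0 ht1]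

/-- 'squeezing': let `γ : [0,ℓ] → ℝ²` be a regular curve of length
`ℓ`, parametrized by arc length, from `(0,0)` to `(d,0)` with
`e_γ(0) = e_γ(ℓ) = (1,0)`.  For `0 < t ≤ 1` let `τ_t` be the concatenation of
`t·γ` with the horizontal segment from `t(d,0)` to `(d,0)`, reparametrized with
constant speed on `[0,ℓ]`.  Then `τ_1 = γ`; each `τ_t` (`ε ≤ t ≤ 1`) is a regular
curve with the same endpoints and end directions as `γ`; the family
`{τ_t}_{t ∈ [ε,1]}` is a regular homotopy; and `i_{τ_t} = i_γ` for all `t`. -/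
theorem squeeze_regular_homotopy (ℓ d ε : ℝ)
    (hd : 0 < d) (hdl : d ≤ ℓ) (hε : 0 < ε) (hε1 : ε ≤ 1)
    (γ v : ℝ → E2)
    (hderiv : ∀ u ∈ Icc (0:ℝ) ℓ, HasDerivWithinAt γ (v u) (Icc (0:ℝ) ℓ) u)
    (hcont : ContinuousOn v (Icc (0:ℝ) ℓ))
    (hunit : ∀ u ∈ Icc (0:ℝ) ℓ, ‖v u‖ = 1)
    (h0 : γ 0 = 0) (hl : γ ℓ = d • vec2 1 0)
    (hv0 : v 0 = vec2 1 0) (hvl : v ℓ = vec2 1 0) :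
    ∃ V : ℝ → ℝ → E2,
      (∀ s ∈ Icc (0:ℝ) ℓ, squeeze γ ℓ d 1 s = γ s) ∧
      (∀ t ∈ Icc ε 1, squeeze γ ℓ d t 0 = γ 0 ∧ squeeze γ ℓ d t ℓ = γ ℓ) ∧
      (∀ t ∈ Icc ε 1, ∀ s ∈ Icc (0:ℝ) ℓ,
        HasDerivWithinAt (squeeze γ ℓ d t) (V t s) (Icc (0:ℝ) ℓ) s ∧ V t s ≠ 0) ∧
      ContinuousOn (fun p : ℝ × ℝ => V p.1 p.2) (Icc ε 1 ×ˢ Icc (0:ℝ) ℓ) ∧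
      (∀ t ∈ Icc ε 1,
        ‖V t 0‖⁻¹ • V t 0 = vec2 1 0 ∧ ‖V t ℓ‖⁻¹ • V t ℓ = vec2 1 0) ∧
      (∀ t ∈ Icc ε 1, ∀ θt θγ : ℝ → ℝ,
        IsAngleFunction 0 ℓ (V t) θt → IsAngleFunction 0 ℓ v θγ →
          (θt ℓ - θt 0) / (2 * π) = (θγ ℓ - θγ 0) / (2 * π)) :=
  squeeze_regular_homotopy_general ℓ d ε hd hdl hε γ v hderiv hcont hunit h0 hl hv0 hvl
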